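/- Let Ω ⊆ ℝ^n be open, let a_1,…,a_r : Ω → ℝ be nonnegative continuous functions and w : Ω → ℝ^r continuous, and let ξ, ξ′ : Ω → ℝ^r be C² functions. For a C² function ζ : Ω → ℝ^r set F(ζ) := −Δζ + Σ_{j=1}^r a_j e^{⟨v_j,ζ⟩} v_j − w. Then at every point of Ω, −Δ log(Σ_{j=1}^r e^{⟨ξ−ξ′, u_j⟩}) ≤ ‖F(ξ)‖ + ‖F(ξ′)‖. (Euclidean-domain version of Theorem 1.3.) -/

import Mathlib

/-!
Put `η = ξ − ξ'` and let `p = softmax η`, the gradient of `log Σ_j e^{z_j}` at `η`; `p` is a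
probability vector, so `‖p‖ ≤ 1`. Since log-sum-exp is convex (its Hessian at `η` is
`v ↦ Σ_j p_j v_j² − ⟨p, v⟩²`, a variance), the chain rule gives `Δ log Σ_j e^{η_j} ≥ ⟨p, Δη⟩`.
Expressing `Δξ' − Δξ` through `F(ξ)`, `F(ξ')` and `N(ζ) = Σ_j a_j e^{⟨v_j,ζ⟩} v_j` leaves the
monotonicity `⟨p, N(ξ) − N(ξ')⟩ ≥ 0`, which holds termwise: `⟨p, v_j⟩` and
`e^{⟨v_j,ξ⟩} − e^{⟨v_j,ξ'⟩}` both have the sign of `⟨v_j, η⟩`.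
-/

open scoped RealInnerProductSpace

/-- The standard basis `u_1, …, u_r` of `ℝ^r`. -/
noncomputable def stdU {r : ℕ} (j : Fin r) : EuclideanSpace ℝ (Fin r) :=
  EuclideanSpace.single j 1

/-- The vectors `v_j = u_{j+1} - u_j` (`j = 1, …, r-1`), `v_r = u_1 - u_r`. -/
noncomputable def stdV {r : ℕ} (j : Fin r) : EuclideanSpace ℝ (Fin r) :=
  stdU (⟨(j.val + 1) % r, Nat.mod_lt _ j.pos⟩ : Fin r) - stdU j

/-- The Euclidean Laplacian `Δf = Σ_i ∂²f/∂x_i²` (componentwise for vector-valued `f`). -/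
noncomputable def lap {n : ℕ} {F : Type*} [NormedAddCommGroup F] [NormedSpace ℝ F]
    (f : EuclideanSpace ℝ (Fin n) → F) (x : EuclideanSpace ℝ (Fin n)) : F :=
  ∑ i : Fin n, iteratedFDeriv ℝ 2 f x (fun _ => EuclideanSpace.single i 1)

open Real Filter Topology

section SecondDerivative

variable {𝕜 : Type*} [NontriviallyNormedField 𝕜]
  {E F G : Type*} [NormedAddCommGroup E] [NormedSpace 𝕜 E] [NormedAddCommGroup F]
  [NormedSpace 𝕜 F] [NormedAddCommGroup G] [NormedSpace 𝕜 G]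

theorem iteratedFDeriv_two_comp_apply {g : F → G} {f : E → F} {x : E}
    (hg : ContDiffAt 𝕜 2 g (f x)) (hf : ContDiffAt 𝕜 2 f x) (e : E) :
    iteratedFDeriv 𝕜 2 (g ∘ f) x (fun _ => e) =
      fderiv 𝕜 g (f x) (iteratedFDeriv 𝕜 2 f x (fun _ => e))
        + iteratedFDeriv 𝕜 2 g (f x) (fun _ => fderiv 𝕜 f x e) := by
  have hderiv : fderiv 𝕜 (g ∘ f) =ᶠ[𝓝 x] fun y => (fderiv 𝕜 g (f y)).comp (fderiv 𝕜 f y) := by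
    filter_upwards [hf.eventually (by simp),
      hf.continuousAt.tendsto.eventually (hg.eventually (by simp))] with y hfy hgy
    exact fderiv_comp y (hgy.differentiableAt two_ne_zero) (hfy.differentiableAt two_ne_zero)
  have hDg : HasFDerivAt (fun y => fderiv 𝕜 g (f y))
      ((fderiv 𝕜 (fderiv 𝕜 g) (f x)).comp (fderiv 𝕜 f x)) x :=
    ((hg.fderiv_right (m := 1) le_rfl).differentiableAt one_ne_zero).hasFDerivAt.comp x
      (hf.differentiableAt two_ne_zero).hasFDerivAt
  have hDf : HasFDerivAt (fderiv 𝕜 f) (fderiv 𝕜 (fderiv 𝕜 f) x) x :=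
    ((hf.fderiv_right (m := 1) le_rfl).differentiableAt one_ne_zero).hasFDerivAt
  rw [iteratedFDeriv_two_apply, iteratedFDeriv_two_apply, iteratedFDeriv_two_apply,
    hderiv.fderiv_eq, (hDg.clm_comp hDf).fderiv]
  simp [add_comm]

theorem iteratedFDeriv_two_apply_diag {g : E → F} {z : E} (hg : ContDiffAt 𝕜 2 g z) (v : E) :
    iteratedFDeriv 𝕜 2 g z (fun _ => v) = fderiv 𝕜 (fun y => fderiv 𝕜 g y v) z v := by
  rw [iteratedFDeriv_two_apply, fderiv_clm_apply
    ((hg.fderiv_right (m := 1) le_rfl).differentiableAt one_ne_zero) (differentiableAt_const v)]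
  simp

end SecondDerivative

section Laplacian

variable {n : ℕ} {F G : Type*} [NormedAddCommGroup F] [NormedSpace ℝ F]
  [NormedAddCommGroup G] [NormedSpace ℝ G] {x : EuclideanSpace ℝ (Fin n)}

theorem lap_sub {f g : EuclideanSpace ℝ (Fin n) → F} (hf : ContDiffAt ℝ 2 f x)
    (hg : ContDiffAt ℝ 2 g x) : lap (f - g) x = lap f x - lap g x := by
  simp only [lap, iteratedFDeriv_sub_apply hf hg, sub_apply, Finset.sum_sub_distrib]

theorem lap_comp {g : F → G} {f : EuclideanSpace ℝ (Fin n) → F} (hg : ContDiffAt ℝ 2 g (f x))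
    (hf : ContDiffAt ℝ 2 f x) :
    lap (g ∘ f) x = fderiv ℝ g (f x) (lap f x)
      + ∑ i, iteratedFDeriv ℝ 2 g (f x) (fun _ => fderiv ℝ f x (EuclideanSpace.single i 1)) := by
  simp only [lap, iteratedFDeriv_two_comp_apply hg hf, map_sum, Finset.sum_add_distrib]

theorem fderiv_apply_lap_le_lap_comp {g : F → ℝ} {f : EuclideanSpace ℝ (Fin n) → F}
    (hg : ContDiffAt ℝ 2 g (f x)) (hf : ContDiffAt ℝ 2 f x)
    (hg_convex : ∀ v, 0 ≤ iteratedFDeriv ℝ 2 g (f x) (fun _ => v)) :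
    fderiv ℝ g (f x) (lap f x) ≤ lap (g ∘ f) x := by
  rw [lap_comp hg hf]
  exact le_add_of_nonneg_right (Finset.sum_nonneg fun i _ => hg_convex _)

end Laplacian

section LogSumExp

variable {ι : Type*} [Fintype ι]

noncomputable def logSumExp (z : EuclideanSpace ℝ ι) : ℝ := log (∑ j, exp (z j))

noncomputable def softmax (z : EuclideanSpace ℝ ι) : EuclideanSpace ℝ ι :=
  WithLp.toLp 2 fun j => exp (z j) / ∑ k, exp (z k)

@[simp] theorem softmax_apply (z : EuclideanSpace ℝ ι) (j : ι) :
    softmax z j = exp (z j) / ∑ k, exp (z k) := rfl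

theorem sum_exp_pos [Nonempty ι] (z : EuclideanSpace ℝ ι) : 0 < ∑ j, exp (z j) :=
  Finset.sum_pos (fun _ _ => exp_pos _) Finset.univ_nonempty

theorem softmax_nonneg (z : EuclideanSpace ℝ ι) (j : ι) : 0 ≤ softmax z j := by
  rw [softmax_apply]; positivity

theorem sum_softmax [Nonempty ι] (z : EuclideanSpace ℝ ι) : ∑ j, softmax z j = 1 := by
  simp only [softmax_apply, ← Finset.sum_div]
  exact div_self (sum_exp_pos z).ne'

theorem norm_softmax_le_one [Nonempty ι] (z : EuclideanSpace ℝ ι) : ‖softmax z‖ ≤ 1 := by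
  have hle : ∀ j, softmax z j ≤ 1 := fun j =>
    (Finset.single_le_sum (fun k _ => softmax_nonneg z k) (Finset.mem_univ j)).trans_eq
      (sum_softmax z)
  rw [EuclideanSpace.norm_eq, sqrt_le_one]
  calc ∑ j, ‖softmax z j‖ ^ 2 = ∑ j, softmax z j ^ 2 := by simp only [norm_eq_abs, sq_abs]
    _ ≤ ∑ j, softmax z j :=
      Finset.sum_le_sum fun j _ => by nlinarith [softmax_nonneg z j, hle j]
    _ = 1 := sum_softmax z

theorem inner_softmax (z v : EuclideanSpace ℝ ι) :
    ⟪softmax z, v⟫ = (∑ j, exp (z j) * v j) / ∑ j, exp (z j) := by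
  rw [PiLp.inner_apply, Finset.sum_div]
  refine Finset.sum_congr rfl fun j _ => ?_
  simp only [softmax_apply, RCLike.inner_apply, conj_trivial]
  ring

theorem inner_softmax_eq_sum (z v : EuclideanSpace ℝ ι) :
    ⟪softmax z, v⟫ = ∑ j, softmax z j * v j := by
  simp only [PiLp.inner_apply, RCLike.inner_apply, conj_trivial, mul_comm]

theorem hasFDerivAt_sum_exp_mul (c : ι → ℝ) (z : EuclideanSpace ℝ ι) :
    HasFDerivAt (fun y : EuclideanSpace ℝ ι => ∑ j, exp (y j) * c j)
      (∑ j, (exp (z j) * c j) • EuclideanSpace.proj (𝕜 := ℝ) j) z :=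
  HasFDerivAt.fun_sum fun j _ => by
    simpa [mul_comm, smul_smul] using
      ((EuclideanSpace.proj (𝕜 := ℝ) j).hasFDerivAt.exp).mul_const (c j)

theorem hasFDerivAt_logSumExp [Nonempty ι] (z : EuclideanSpace ℝ ι) :
    HasFDerivAt logSumExp (innerSL ℝ (softmax z)) z := by
  have h := (hasFDerivAt_sum_exp_mul 1 z).log (by simpa using (sum_exp_pos z).ne')
  simp only [Pi.one_apply, mul_one] at h
  refine h.congr_fderiv (ContinuousLinearMap.ext fun v => ?_)
  simp [inner_softmax, div_eq_inv_mul]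

theorem contDiff_logSumExp [Nonempty ι] {m : WithTop ℕ∞} : ContDiff ℝ m (logSumExp (ι := ι)) :=
  (ContDiff.sum fun j _ => (EuclideanSpace.proj j).contDiff.exp).log
    fun z => (sum_exp_pos z).ne'

end LogSumExp

section LogSumExpHessian

variable {ι : Type*} [Fintype ι] [Nonempty ι]

theorem fderiv_inner_softmax_apply (z v : EuclideanSpace ℝ ι) :
    fderiv ℝ (fun y => ⟪softmax y, v⟫) z v =
      ∑ j, softmax z j * v j ^ 2 - ⟪softmax z, v⟫ ^ 2 := by
  have hS := hasFDerivAt_sum_exp_mul 1 z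
  simp only [Pi.one_apply, mul_one] at hS
  have h : HasFDerivAt
      (fun y : EuclideanSpace ℝ ι => (∑ j, exp (y j) * v j) * (∑ j, exp (y j))⁻¹) _ z :=
    (hasFDerivAt_sum_exp_mul (fun j => v j) z).mul
      ((hasDerivAt_inv (sum_exp_pos z).ne').comp_hasFDerivAt z hS)
  simp only [inner_softmax, div_eq_mul_inv]
  rw [h.fderiv]
  have hsq :
      ∑ j, softmax z j * v j ^ 2 = (∑ j, exp (z j) * v j * v j) * (∑ j, exp (z j))⁻¹ := by
    rw [Finset.sum_mul]
    exact Finset.sum_congr rfl fun j _ => by rw [softmax_apply]; ring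
  rw [hsq]
  simp only [neg_smul, smul_neg, add_apply, neg_apply, smul_apply, sum_apply, PiLp.proj_apply,
    smul_eq_mul]
  field_simp
  ring

theorem iteratedFDeriv_two_logSumExp_nonneg (z v : EuclideanSpace ℝ ι) :
    0 ≤ iteratedFDeriv ℝ 2 logSumExp z (fun _ => v) := by
  have hderiv : (fun y => fderiv ℝ logSumExp y v) = fun y => ⟪softmax y, v⟫ :=
    funext fun y => by rw [(hasFDerivAt_logSumExp y).fderiv, innerSL_apply_apply]
  rw [iteratedFDeriv_two_apply_diag contDiff_logSumExp.contDiffAt, hderiv,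
    fderiv_inner_softmax_apply, sub_nonneg, inner_softmax_eq_sum]
  simpa using (even_two.convexOn_pow (𝕜 := ℝ)).map_sum_le (t := Finset.univ)
    (w := fun j => softmax z j) (p := fun j => v j) (fun j _ => softmax_nonneg z j) (sum_softmax z)
    (fun j _ => Set.mem_univ _)

theorem inner_softmax_lap_le_lap_logSumExp_comp {n : ℕ}
    {f : EuclideanSpace ℝ (Fin n) → EuclideanSpace ℝ ι} {x : EuclideanSpace ℝ (Fin n)}
    (hf : ContDiffAt ℝ 2 f x) : ⟪softmax (f x), lap f x⟫ ≤ lap (logSumExp ∘ f) x := by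
  simpa [(hasFDerivAt_logSumExp (f x)).fderiv] using fderiv_apply_lap_le_lap_comp
    contDiff_logSumExp.contDiffAt hf (iteratedFDeriv_two_logSumExp_nonneg (f x))

end LogSumExpHessian

theorem exp_sub_exp_mul_exp_sub_exp_nonneg {s t α β : ℝ} (h : t - s = α - β) :
    0 ≤ (exp t - exp s) * (exp α - exp β) := by
  have hprod : (exp t - exp s) * (exp α - exp β) = exp s * exp β * (exp (t - s) - 1) ^ 2 := by
    rw [h, show t = s + (α - β) by linarith, show α = β + (α - β) by ring, exp_add, exp_add]
    ring_nf
  rw [hprod]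
  positivity

theorem inner_softmax_sub_mul_exp_inner_sub_nonneg {ι : Type*} [Fintype ι] [DecidableEq ι]
    (k l : ι) (ζ ζ' : EuclideanSpace ℝ ι) :
    0 ≤ ⟪softmax (ζ - ζ'), EuclideanSpace.single k 1 - EuclideanSpace.single l 1⟫ *
      (exp ⟪EuclideanSpace.single k 1 - EuclideanSpace.single l 1, ζ⟫
        - exp ⟪EuclideanSpace.single k 1 - EuclideanSpace.single l 1, ζ'⟫) := by
  simp only [inner_sub_left, inner_sub_right, EuclideanSpace.inner_single_left,
    EuclideanSpace.inner_single_right, softmax_apply, conj_trivial, one_mul]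
  rw [← sub_div, div_mul_eq_mul_div]
  refine div_nonneg (exp_sub_exp_mul_exp_sub_exp_nonneg ?_) (by positivity)
  simp only [PiLp.sub_apply]
  ring

section Toda

variable {r : ℕ}

noncomputable def todaForce (a : Fin r → ℝ) (ζ : EuclideanSpace ℝ (Fin r)) :
    EuclideanSpace ℝ (Fin r) :=
  ∑ j, (a j * exp ⟪stdV j, ζ⟫) • stdV j

theorem inner_softmax_todaForce_sub_nonneg {a : Fin r → ℝ} (ha : ∀ j, 0 ≤ a j)
    (ζ ζ' : EuclideanSpace ℝ (Fin r)) :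
    0 ≤ ⟪softmax (ζ - ζ'), todaForce a ζ - todaForce a ζ'⟫ := by
  simp only [todaForce, ← Finset.sum_sub_distrib, ← sub_smul, inner_sum, real_inner_smul_right]
  refine Finset.sum_nonneg fun j _ => ?_
  rw [← mul_sub, mul_assoc, mul_comm (_ - _)]
  exact mul_nonneg (ha j) (inner_softmax_sub_mul_exp_inner_sub_nonneg _ _ ζ ζ')

theorem inner_softmax_sub_le_norm_add_norm [Nonempty (Fin r)] {a : Fin r → ℝ}
    (ha : ∀ j, 0 ≤ a j)
    (w ζ ζ' L L' : EuclideanSpace ℝ (Fin r)) :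
    ⟪softmax (ζ - ζ'), L' - L⟫ ≤ ‖-L + todaForce a ζ - w‖ + ‖-L' + todaForce a ζ' - w‖ := by
  set p := softmax (ζ - ζ')
  set T := -L + todaForce a ζ - w
  set T' := -L' + todaForce a ζ' - w
  have hL : L' - L = T - T' - (todaForce a ζ - todaForce a ζ') := by simp only [T, T']; abel
  have hp : ‖p‖ ≤ 1 := norm_softmax_le_one _
  have hT : ⟪p, T⟫ ≤ ‖T‖ :=
    (real_inner_le_norm p T).trans (mul_le_of_le_one_left (norm_nonneg T) hp)
  have hT' : -⟪p, T'⟫ ≤ ‖T'‖ :=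
    (neg_le_abs _).trans
      ((abs_real_inner_le_norm p T').trans (mul_le_of_le_one_left (norm_nonneg T') hp))
  calc ⟪p, L' - L⟫ = ⟪p, T⟫ - ⟪p, T'⟫ - ⟪p, todaForce a ζ - todaForce a ζ'⟫ := by
        rw [hL, inner_sub_right, inner_sub_right]
    _ ≤ ⟪p, T⟫ - ⟪p, T'⟫ := sub_le_self _ (inner_softmax_todaForce_sub_nonneg ha ζ ζ')
    _ ≤ ‖T‖ + ‖T'‖ := by linarith

end Toda

theorem distance_estimate_general (n r : ℕ) (hr : 2 ≤ r)
    (Ω : Set (EuclideanSpace ℝ (Fin n))) (hΩ : IsOpen Ω)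
    (a : Fin r → EuclideanSpace ℝ (Fin n) → ℝ)
    (ha_nonneg : ∀ j, ∀ x ∈ Ω, 0 ≤ a j x)
    (w : EuclideanSpace ℝ (Fin n) → EuclideanSpace ℝ (Fin r))
    (ξ ξ' : EuclideanSpace ℝ (Fin n) → EuclideanSpace ℝ (Fin r))
    (hξ : ContDiffOn ℝ 2 ξ Ω) (hξ' : ContDiffOn ℝ 2 ξ' Ω) :
    ∀ x ∈ Ω,
      -lap (fun y => Real.log (∑ j : Fin r, Real.exp ⟪ξ y - ξ' y, stdU j⟫)) x
        ≤ ‖-lap ξ x + ∑ j : Fin r, (a j x * Real.exp ⟪stdV j, ξ x⟫) • stdV j - w x‖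
          + ‖-lap ξ' x + ∑ j : Fin r, (a j x * Real.exp ⟪stdV j, ξ' x⟫) • stdV j - w x‖ := by
  intro x hx
  have : Nonempty (Fin r) := ⟨⟨0, by omega⟩⟩
  have hξx : ContDiffAt ℝ 2 ξ x := hξ.contDiffAt (hΩ.mem_nhds hx)
  have hξ'x : ContDiffAt ℝ 2 ξ' x := hξ'.contDiffAt (hΩ.mem_nhds hx)
  have hlog : (fun y => log (∑ j, exp ⟪ξ y - ξ' y, stdU j⟫)) = logSumExp ∘ (ξ - ξ') := by
    funext y
    simp [logSumExp, stdU, EuclideanSpace.inner_single_right]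
  calc -lap (fun y => log (∑ j, exp ⟪ξ y - ξ' y, stdU j⟫)) x
      ≤ -⟪softmax (ξ x - ξ' x), lap (ξ - ξ') x⟫ :=
        hlog ▸ neg_le_neg (inner_softmax_lap_le_lap_logSumExp_comp (hξx.sub hξ'x))
    _ = ⟪softmax (ξ x - ξ' x), lap ξ' x - lap ξ x⟫ := by
        rw [lap_sub hξx hξ'x, ← inner_neg_right, neg_sub]
    _ ≤ _ := inner_softmax_sub_le_norm_add_norm (fun j => ha_nonneg j x hx) (w x) _ _ _ _

/-- Euclidean-domain version of Theorem 1.3: with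
`F(ζ) = −Δζ + Σ_j a_j e^{⟨v_j,ζ⟩} v_j − w`, for any `C²` functions `ξ, ξ'` on `Ω`,
`−Δ log(Σ_j e^{⟨ξ−ξ',u_j⟩}) ≤ ‖F(ξ)‖ + ‖F(ξ')‖` on `Ω`. -/
theorem distance_estimate (n r : ℕ) (hr : 2 ≤ r)
    (Ω : Set (EuclideanSpace ℝ (Fin n))) (hΩ : IsOpen Ω)
    (a : Fin r → EuclideanSpace ℝ (Fin n) → ℝ)
    (ha_cont : ∀ j, ContinuousOn (a j) Ω) (ha_nonneg : ∀ j, ∀ x ∈ Ω, 0 ≤ a j x)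
    (w : EuclideanSpace ℝ (Fin n) → EuclideanSpace ℝ (Fin r)) (hw : ContinuousOn w Ω)
    (ξ ξ' : EuclideanSpace ℝ (Fin n) → EuclideanSpace ℝ (Fin r))
    (hξ : ContDiffOn ℝ 2 ξ Ω) (hξ' : ContDiffOn ℝ 2 ξ' Ω) :
    ∀ x ∈ Ω,
      -lap (fun y => Real.log (∑ j : Fin r, Real.exp ⟪ξ y - ξ' y, stdU j⟫)) x
        ≤ ‖-lap ξ x + ∑ j : Fin r, (a j x * Real.exp ⟪stdV j, ξ x⟫) • stdV j - w x‖
          + ‖-lap ξ' x + ∑ j : Fin r, (a j x * Real.exp ⟪stdV j, ξ' x⟫) • stdV j - w x‖ :=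
  distance_estimate_general n r hr Ω hΩ a ha_nonneg w ξ ξ' hξ hξ'
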